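/- In the dual Hesse arrangement of the 9 lines defined by the linear factors of (x^3-y^3)(y^3-z^3)(z^3-x^3) in ℙ²(ℂ), any two distinct lines meet in a point lying on exactly 3 of the 9 lines; in total the lines have exactly 12 intersection points, each of multiplicity 3. -/

import Mathlib

noncomputable section

/-- The complex projective plane (also used as its dual, parametrizing lines). -/
abbrev P2 := Projectivization ℂ (Fin 3 → ℂ)

/-- The point `P` lies on the line `L` (a point of the dual plane). -/
def OnL (P L : P2) : Prop :=
  L.rep 0 * P.rep 0 + L.rep 1 * P.rep 1 + L.rep 2 * P.rep 2 = 0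

/-- `P` is the projective point with homogeneous coordinates `(a : b : c)`. -/
def IsPt (P : P2) (a b c : ℂ) : Prop := ∃ t : ℂ, t ≠ 0 ∧ P.rep = t • ![a, b, c]

/-- The 9 lines of the dual Hesse arrangement:
`x - εᵏy = 0`, `y - εᵏz = 0`, `z - εᵏx = 0` for `k = 0,1,2`. -/
def DualHesse (ε : ℂ) : Set P2 :=
  {L | ∃ k : Fin 3,
    IsPt L 1 (-ε ^ (k : ℕ)) 0 ∨ IsPt L 0 1 (-ε ^ (k : ℕ)) ∨ IsPt L (-ε ^ (k : ℕ)) 0 1}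

/-! Write the nine lines as `x_i = εᵏ x_{i+1}` with `i, k ∈ ℤ/3`, so that each line satisfies
`x_i³ = x_{i+1}³`. Two lines of the same family `i` meet only where `x_i = x_{i+1} = 0`, a
coordinate point, which lies on the three lines of that family and on no other line. A point on
lines of two different families has `x³ = y³ = z³ ≠ 0`, so it is one of the nine points
`(εᵃ : εᵇ : 1)`, and such a point lies on exactly one line of each family. Hence there are
`3 + 9 = 12` intersection points, each on exactly three lines. -/

namespace IsPrimitiveRoot

variable {M : Type*} [CommMonoid M] {ζ : M} {n : ℕ}

theorem pow_finVal_add (h : IsPrimitiveRoot ζ n) (a b : Fin n) :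
    ζ ^ ((a + b : Fin n) : ℕ) = ζ ^ (a : ℕ) * ζ ^ (b : ℕ) := by
  rw [Fin.val_add, ← pow_add]
  have h_mod := pow_mod_orderOf ζ (a + b : ℕ)
  rwa [← h.eq_orderOf] at h_mod

theorem pow_finVal_injective (h : IsPrimitiveRoot ζ n) :
    Function.Injective fun a : Fin n => ζ ^ (a : ℕ) :=
  fun a b hab => Fin.ext (h.pow_inj a.isLt b.isLt hab)

end IsPrimitiveRoot

theorem IsPrimitiveRoot.exists_pow_finVal_eq {R : Type*} [CommRing R] [IsDomain R] {ζ ξ : R}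
    {n : ℕ} [NeZero n] (h : IsPrimitiveRoot ζ n) (hξ : ξ ^ n = 1) :
    ∃ a : Fin n, ζ ^ (a : ℕ) = ξ := by
  obtain ⟨i, hi, rfl⟩ := h.eq_pow_of_pow_eq_one hξ
  exact ⟨⟨i, hi⟩, rfl⟩

open Projectivization

theorem onL_iff_dotProduct (P L : P2) : OnL P L ↔ L.rep ⬝ᵥ P.rep = 0 := by
  simp [OnL, dotProduct, Fin.sum_univ_three]

theorem onL_mk_mk_iff {v w : Fin 3 → ℂ} (hv : v ≠ 0) (hw : w ≠ 0) :
    OnL (mk ℂ v hv) (mk ℂ w hw) ↔ w ⬝ᵥ v = 0 := by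
  obtain ⟨a, ha⟩ := exists_smul_eq_mk_rep ℂ v hv
  obtain ⟨b, hb⟩ := exists_smul_eq_mk_rep ℂ w hw
  rw [onL_iff_dotProduct, ← ha, ← hb, Units.smul_def, Units.smul_def, smul_dotProduct,
    dotProduct_smul, smul_smul, smul_eq_zero, or_iff_right (by simp)]

theorem isPt_iff_mk_eq {P : P2} (v : Fin 3 → ℂ) (hv : v ≠ 0) :
    IsPt P (v 0) (v 1) (v 2) ↔ mk ℂ v hv = P := by
  have hv' : ![v 0, v 1, v 2] = v := by ext m; fin_cases m <;> rfl
  rw [IsPt, hv', eq_comm, ← mk_rep P, mk_eq_mk_iff', mk_rep]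
  refine ⟨fun ⟨t, _, ht⟩ => ⟨t, ht.symm⟩, fun ⟨t, ht⟩ => ⟨t, ?_, ht.symm⟩⟩
  rintro rfl
  exact P.rep_nonzero (by rw [← ht, zero_smul])

namespace DualHesse

def line (ε : ℂ) (i k : Fin 3) : P2 :=
  mk ℂ (Pi.single i 1 - ε ^ (k : ℕ) • Pi.single (i + 1) 1) fun h => by simpa using congrFun h i

def coordPoint (m : Fin 3) : P2 :=
  mk ℂ (Pi.single m 1) (by simp)

def torusPoint (ε : ℂ) (a b : Fin 3) : P2 :=
  mk ℂ (fun m => ε ^ ((![a, b, 0] m : Fin 3) : ℕ)) fun h => by simpa using congrFun h 2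

def intersectionPoint (ε : ℂ) : Fin 3 ⊕ Fin 3 × Fin 3 → P2 :=
  Sum.elim coordPoint fun p => torusPoint ε p.1 p.2

def linesThrough (ε : ℂ) (P : P2) : Set P2 := {L ∈ DualHesse ε | OnL P L}

variable {ε : ℂ}

theorem mem_dualHesse_iff {L : P2} : L ∈ DualHesse ε ↔ ∃ i k, line ε i k = L := by
  simp only [DualHesse, Set.mem_ofPred_eq]
  constructor
  · rintro ⟨k, h | h | h⟩
    · exact ⟨0, k, (isPt_iff_mk_eq _ _).1 (by simpa using h)⟩
    · exact ⟨1, k, (isPt_iff_mk_eq _ _).1 (by simpa using h)⟩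
    · exact ⟨2, k, (isPt_iff_mk_eq _ _).1 (by simpa using h)⟩
  · rintro ⟨i, k, rfl⟩
    have h := (isPt_iff_mk_eq (P := line ε i k) _ _).2 rfl
    fin_cases i
    · exact ⟨k, Or.inl (by simpa using h)⟩
    · exact ⟨k, Or.inr (Or.inl (by simpa using h))⟩
    · exact ⟨k, Or.inr (Or.inr (by simpa using h))⟩

theorem onL_mk_line_iff {v : Fin 3 → ℂ} (hv : v ≠ 0) (i k : Fin 3) :
    OnL (mk ℂ v hv) (line ε i k) ↔ v i = ε ^ (k : ℕ) * v (i + 1) := by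
  rw [line, onL_mk_mk_iff, sub_dotProduct, smul_dotProduct, single_dotProduct, single_dotProduct,
    smul_eq_mul, one_mul, one_mul, sub_eq_zero]

theorem onL_line_iff (P : P2) (i k : Fin 3) :
    OnL P (line ε i k) ↔ P.rep i = ε ^ (k : ℕ) * P.rep (i + 1) := by
  conv_lhs => rw [← mk_rep P]
  exact onL_mk_line_iff _ i k

theorem coordPoint_onL_line_iff (hε : ε ≠ 0) (m i k : Fin 3) :
    OnL (coordPoint m) (line ε i k) ↔ m = i + 2 := by
  rw [coordPoint, onL_mk_line_iff]
  fin_cases m <;> fin_cases i <;> simp [eq_comm (a := (0 : ℂ)), hε]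

theorem torusPoint_onL_line_iff (hε : IsPrimitiveRoot ε 3) (a b i k : Fin 3) :
    OnL (torusPoint ε a b) (line ε i k) ↔ k = ![a, b, 0] i - ![a, b, 0] (i + 1) := by
  rw [torusPoint, onL_mk_line_iff, ← hε.pow_finVal_add, hε.pow_finVal_injective.eq_iff,
    eq_sub_iff_add_eq, eq_comm]

theorem line_injective (hε : IsPrimitiveRoot ε 3) :
    Function.Injective fun p : Fin 3 × Fin 3 => line ε p.1 p.2 := by
  rintro ⟨i, k⟩ ⟨j, l⟩ h
  have hε₀ : ε ≠ 0 := hε.ne_zero (by norm_num)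
  obtain rfl : i = j := by
    have h_on := (coordPoint_onL_line_iff hε₀ (i + 2) i k).2 rfl
    rw [show line ε i k = line ε j l from h, coordPoint_onL_line_iff hε₀] at h_on
    exact add_right_cancel h_on
  obtain ⟨t, ht⟩ := (mk_eq_mk_iff' ℂ _ _ _ _).1 h
  have h_i : t = 1 := by simpa using congrFun ht i
  have h_succ : t * ε ^ (l : ℕ) = ε ^ (k : ℕ) := by simpa using congrFun ht (i + 1)
  rw [h_i, one_mul] at h_succ
  rw [hε.pow_finVal_injective h_succ]

theorem coordPoint_injective : Function.Injective coordPoint := by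
  intro m n h
  obtain ⟨t, ht⟩ := (mk_eq_mk_iff' ℂ _ _ _ _).1 h
  by_contra hmn
  simpa [Pi.single_apply, hmn] using congrFun ht m

theorem torusPoint_injective (hε : IsPrimitiveRoot ε 3) :
    Function.Injective fun p : Fin 3 × Fin 3 => torusPoint ε p.1 p.2 := by
  rintro ⟨a, b⟩ ⟨c, d⟩ (h : torusPoint ε a b = torusPoint ε c d)
  have h_on : ∀ i, OnL (torusPoint ε c d) (line ε i (![a, b, 0] i - ![a, b, 0] (i + 1))) :=
    fun i => h ▸ (torusPoint_onL_line_iff hε a b i _).2 rfl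
  have h₀ : a - b = c - d := by simpa using (torusPoint_onL_line_iff hε _ _ _ _).1 (h_on 0)
  obtain rfl : b = d := by simpa using (torusPoint_onL_line_iff hε _ _ _ _).1 (h_on 1)
  rw [sub_left_injective h₀]

theorem coordPoint_ne_torusPoint (hε : IsPrimitiveRoot ε 3) (m a b : Fin 3) :
    coordPoint m ≠ torusPoint ε a b := by
  intro h
  have h_on : ∀ k, OnL (torusPoint ε a b) (line ε (m - 2) k) := fun k =>
    h ▸ (coordPoint_onL_line_iff (hε.ne_zero (by norm_num)) m (m - 2) k).2 (sub_add_cancel m 2).symm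
  have h₀ := (torusPoint_onL_line_iff hε _ _ _ _).1 (h_on 0)
  have h₁ := (torusPoint_onL_line_iff hε _ _ _ _).1 (h_on 1)
  exact absurd (h₀.trans h₁.symm) (by decide)

theorem intersectionPoint_injective (hε : IsPrimitiveRoot ε 3) :
    Function.Injective (intersectionPoint ε) := by
  rintro (m | p) (n | q) h
  · rw [coordPoint_injective h]
  · exact absurd h (coordPoint_ne_torusPoint hε m q.1 q.2)
  · exact absurd h.symm (coordPoint_ne_torusPoint hε n p.1 p.2)
  · rw [torusPoint_injective hε h]

theorem ncard_linesThrough (hε : IsPrimitiveRoot ε 3) (P : P2) :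
    (linesThrough ε P).ncard = {p : Fin 3 × Fin 3 | OnL P (line ε p.1 p.2)}.ncard := by
  rw [← Set.ncard_image_of_injective _ (line_injective hε)]
  congr 1
  ext L
  simp only [linesThrough, mem_dualHesse_iff, Set.mem_image, Set.mem_ofPred_eq, Prod.exists]
  constructor
  · rintro ⟨⟨i, k, rfl⟩, h⟩
    exact ⟨i, k, h, rfl⟩
  · rintro ⟨i, k, h, rfl⟩
    exact ⟨⟨i, k, rfl⟩, h⟩

theorem ncard_linesThrough_coordPoint (hε : IsPrimitiveRoot ε 3) (m : Fin 3) :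
    (linesThrough ε (coordPoint m)).ncard = 3 := by
  have h_set : {p : Fin 3 × Fin 3 | OnL (coordPoint m) (line ε p.1 p.2)} =
      Set.range (Prod.mk (m - 2)) := by
    ext ⟨i, k⟩
    simp [coordPoint_onL_line_iff (hε.ne_zero (by norm_num)), eq_sub_iff_add_eq, eq_comm]
  rw [ncard_linesThrough hε, h_set, Set.ncard_range_of_injective (Prod.mk_right_injective _)]
  simp

theorem ncard_linesThrough_torusPoint (hε : IsPrimitiveRoot ε 3) (a b : Fin 3) :
    (linesThrough ε (torusPoint ε a b)).ncard = 3 := by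
  have h_set : {p : Fin 3 × Fin 3 | OnL (torusPoint ε a b) (line ε p.1 p.2)} =
      Set.range fun i => (i, ![a, b, 0] i - ![a, b, 0] (i + 1)) := by
    ext ⟨i, k⟩
    simp [torusPoint_onL_line_iff hε, eq_comm]
  rw [ncard_linesThrough hε, h_set,
    Set.ncard_range_of_injective fun i j h => congrArg Prod.fst h]
  simp

theorem ncard_linesThrough_intersectionPoint (hε : IsPrimitiveRoot ε 3) :
    ∀ x, (linesThrough ε (intersectionPoint ε x)).ncard = 3
  | .inl m => ncard_linesThrough_coordPoint hε m
  | .inr (a, b) => ncard_linesThrough_torusPoint hε a b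

theorem coordPoint_eq_of_rep_eq_zero {P : P2} {i : Fin 3} (h₀ : P.rep i = 0)
    (h₁ : P.rep (i + 1) = 0) : coordPoint (i + 2) = P := by
  rw [eq_comm, ← mk_rep P, coordPoint, mk_eq_mk_iff']
  refine ⟨P.rep (i + 2), funext fun m => ?_⟩
  fin_cases i <;> fin_cases m <;> simp_all

theorem exists_torusPoint_eq (hε : IsPrimitiveRoot ε 3) {P : P2}
    (h : ∀ m, P.rep m ^ 3 = P.rep 2 ^ 3) : ∃ a b, torusPoint ε a b = P := by
  have h₂ : P.rep 2 ≠ 0 := fun h₂ => P.rep_nonzero (funext fun m => by simpa [h₂] using h m)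
  have h_root : ∀ m, ∃ a : Fin 3, ε ^ (a : ℕ) = P.rep m / P.rep 2 := fun m =>
    hε.exists_pow_finVal_eq (by rw [div_pow, h m, div_self (pow_ne_zero _ h₂)])
  obtain ⟨a, ha⟩ := h_root 0
  obtain ⟨b, hb⟩ := h_root 1
  refine ⟨a, b, ?_⟩
  rw [← mk_rep P, torusPoint, mk_eq_mk_iff']
  refine ⟨(P.rep 2)⁻¹, funext fun m => ?_⟩
  fin_cases m
  · simpa [div_eq_inv_mul] using ha.symm
  · simpa [div_eq_inv_mul] using hb.symm
  · simp [h₂]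

theorem rep_pow_three_eq_of_onL_line (hε : IsPrimitiveRoot ε 3) {P : P2} {i k : Fin 3}
    (h : OnL P (line ε i k)) : P.rep i ^ 3 = P.rep (i + 1) ^ 3 := by
  rw [(onL_line_iff P i k).1 h, mul_pow, ← pow_mul, pow_mul', hε.pow_eq_one, one_pow, one_mul]

theorem rep_pow_three_eq_of_onL_line_of_ne (hε : IsPrimitiveRoot ε 3) {P : P2} {i j k l : Fin 3}
    (hij : i ≠ j) (h₁ : OnL P (line ε i k)) (h₂ : OnL P (line ε j l)) :
    ∀ m, P.rep m ^ 3 = P.rep 2 ^ 3 := by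
  have c₁ := rep_pow_three_eq_of_onL_line hε h₁
  have c₂ := rep_pow_three_eq_of_onL_line hε h₂
  intro m
  fin_cases i <;> fin_cases j <;> fin_cases m <;> simp_all

theorem exists_intersectionPoint_eq (hε : IsPrimitiveRoot ε 3) {P L₁ L₂ : P2}
    (h₁ : L₁ ∈ DualHesse ε) (h₂ : L₂ ∈ DualHesse ε) (hne : L₁ ≠ L₂)
    (o₁ : OnL P L₁) (o₂ : OnL P L₂) : ∃ x, intersectionPoint ε x = P := by
  obtain ⟨i, k, rfl⟩ := mem_dualHesse_iff.1 h₁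
  obtain ⟨j, l, rfl⟩ := mem_dualHesse_iff.1 h₂
  by_cases hij : i = j
  · subst hij
    rw [onL_line_iff] at o₁ o₂
    have hkl : ε ^ (k : ℕ) ≠ ε ^ (l : ℕ) := fun h => hne (by rw [hε.pow_finVal_injective h])
    have h_succ : P.rep (i + 1) = 0 := by
      by_contra h
      exact hkl (mul_right_cancel₀ h (o₁.symm.trans o₂))
    have h_i : P.rep i = 0 := by rw [o₁, h_succ, mul_zero]
    exact ⟨.inl (i + 2), coordPoint_eq_of_rep_eq_zero h_i h_succ⟩
  · obtain ⟨a, b, h⟩ := exists_torusPoint_eq hε (rep_pow_three_eq_of_onL_line_of_ne hε hij o₁ o₂)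
    exact ⟨.inr (a, b), h⟩

end DualHesse

open DualHesse

/-- In the dual Hesse arrangement, any intersection point of two distinct lines lies on
exactly 3 of the 9 lines, and there are exactly 12 intersection points in total. -/
theorem dual_hesse_triple_points (ε : ℂ) (hε : IsPrimitiveRoot ε 3) :
    (∀ L₁ ∈ DualHesse ε, ∀ L₂ ∈ DualHesse ε, L₁ ≠ L₂ →
      ∀ P : P2, OnL P L₁ → OnL P L₂ → {L ∈ DualHesse ε | OnL P L}.ncard = 3) ∧
    {P : P2 | ∃ L₁ ∈ DualHesse ε, ∃ L₂ ∈ DualHesse ε,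
      L₁ ≠ L₂ ∧ OnL P L₁ ∧ OnL P L₂}.ncard = 12 := by
  have h_points : {P : P2 | ∃ L₁ ∈ DualHesse ε, ∃ L₂ ∈ DualHesse ε,
      L₁ ≠ L₂ ∧ OnL P L₁ ∧ OnL P L₂} = Set.range (intersectionPoint ε) := by
    ext P
    refine ⟨fun ⟨L₁, h₁, L₂, h₂, hne, o₁, o₂⟩ => exists_intersectionPoint_eq hε h₁ h₂ hne o₁ o₂, ?_⟩
    rintro ⟨x, rfl⟩
    have h_three := ncard_linesThrough_intersectionPoint hε x
    obtain ⟨L₁, L₂, ⟨h₁, o₁⟩, ⟨h₂, o₂⟩, hne⟩ :=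
      (Set.one_lt_ncard_iff (Set.finite_of_ncard_pos (h_three ▸ three_pos))).1 (by omega)
    exact ⟨L₁, h₁, L₂, h₂, hne, o₁, o₂⟩
  refine ⟨fun L₁ h₁ L₂ h₂ hne P o₁ o₂ => ?_, ?_⟩
  · obtain ⟨x, rfl⟩ := exists_intersectionPoint_eq hε h₁ h₂ hne o₁ o₂
    exact ncard_linesThrough_intersectionPoint hε x
  · rw [h_points, Set.ncard_range_of_injective (intersectionPoint_injective hε)]
    simp
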